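/- Identification of the copula of the unobserved heterogeneity (Lemma 3.3): ℙ-almost surely, 𝔼[D₀·D₁ | σ(P₀,P₁)] = C(P₀,P₁); that is, the conditional probability of joint treatment take-up given the pair of propensity scores is (a version of) the copula of (V₀,V₁) evaluated at the propensity scores. -/

import Mathlib

open MeasureTheory ProbabilityTheory

/-!
Since the propensity scores `P = (h₀ Z, h₁ Z)` are a function of `Z`, they are independent of
`W = (V₀, V₁)`. Conditioning on `P` therefore freezes `P` while leaving the law of `W` unchanged, so
`𝔼[1{W ≤ P} | P] = ℙ(W ≤ p)` evaluated at `p = P`, which is `C(P₀, P₁)`.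
-/

namespace ProbabilityTheory

variable {α β Ω : Type*} {mα : MeasurableSpace α} [MeasurableSpace β] [MeasurableSpace Ω]
  [StandardBorelSpace Ω] [Nonempty Ω] {μ : Measure α} [IsFiniteMeasure μ] {X : α → β} {Y : α → Ω}

lemma IndepFun.condDistrib_ae_eq_const (hX : Measurable X) (hY : Measurable Y)
    (hXY : IndepFun X Y μ) :
    condDistrib Y X μ =ᵐ[μ.map X] Kernel.const β (μ.map Y) := by
  refine condDistrib_ae_eq_of_measure_eq_compProd X hY.aemeasurable ?_
  rw [Measure.compProd_const]
  exact (indepFun_iff_map_prod_eq_prod_map_map hX.aemeasurable hY.aemeasurable).mp hXY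

lemma IndepFun.condExp_prod_ae_eq_integral {F : Type*} [NormedAddCommGroup F] [NormedSpace ℝ F]
    [CompleteSpace F] {f : β × Ω → F} (hX : Measurable X) (hY : Measurable Y)
    (hXY : IndepFun X Y μ) (hf : StronglyMeasurable f)
    (hf_int : Integrable (fun a => f (X a, Y a)) μ) :
    μ[fun a => f (X a, Y a) | MeasurableSpace.comap X inferInstance] =ᵐ[μ]
      fun a => ∫ y, f (X a, y) ∂(μ.map Y) := by
  filter_upwards [condExp_prod_ae_eq_integral_condDistrib hX hY.aemeasurable hf hf_int,
    ae_of_ae_map hX.aemeasurable (hXY.condDistrib_ae_eq_const hX hY)] with a ha hconst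
  rw [ha, hconst, Kernel.const_apply]

lemma IndepFun.condExp_indicator_preimage_ae_eq (hX : Measurable X) (hY : Measurable Y)
    (hXY : IndepFun X Y μ) {S : Set (β × Ω)} (hS : MeasurableSet S) :
    μ[fun a => S.indicator 1 (X a, Y a) | MeasurableSpace.comap X inferInstance] =ᵐ[μ]
      fun a => (μ.map Y).real (Prod.mk (X a) ⁻¹' S) := by
  have hint : Integrable (fun a => S.indicator (1 : β × Ω → ℝ) (X a, Y a)) μ :=
    (integrable_const (1 : ℝ)).indicator ((hX.prodMk hY) hS)
  refine (hXY.condExp_prod_ae_eq_integral hX hY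
    (stronglyMeasurable_const.indicator hS) hint).trans (ae_of_all _ fun a => ?_)
  exact integral_indicator_one (measurable_prodMk_left hS)

end ProbabilityTheory

theorem copula_identification
    {Ω 𝒵 𝒰 : Type*} [MeasurableSpace Ω] [MeasurableSpace 𝒵] [MeasurableSpace 𝒰]
    (μ : Measure Ω) [IsProbabilityMeasure μ]
    (Z : Ω → 𝒵) (U : Ω → 𝒰) (V₀ V₁ : Ω → ℝ)
    (hZ : Measurable Z)
    (hV₀ : Measurable V₀) (hV₁ : Measurable V₁)
    -- measurable threshold functions with values in [0,1]
    (h₀ h₁ : 𝒵 → ℝ) (hh₀ : Measurable h₀) (hh₁ : Measurable h₁)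
    -- random assignment: Z independent of (V₀, V₁, U)
    (hindep : IndepFun Z (fun ω => (V₀ ω, V₁ ω, U ω)) μ)
    -- binary treatments
    (D₀ D₁ : Ω → ℝ)
    (hD₀ : ∀ ω, D₀ ω = if V₀ ω ≤ h₀ (Z ω) then 1 else 0)
    (hD₁ : ∀ ω, D₁ ω = if V₁ ω ≤ h₁ (Z ω) then 1 else 0)
    -- the copula of (V₀, V₁)
    (C : ℝ → ℝ → ℝ)
    (hC : ∀ p q, C p q = (μ {ω | V₀ ω ≤ p ∧ V₁ ω ≤ q}).toReal) :
    μ[fun ω => D₀ ω * D₁ ω |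
        MeasurableSpace.comap (fun ω => (h₀ (Z ω), h₁ (Z ω))) inferInstance]
      =ᵐ[μ] fun ω => C (h₀ (Z ω)) (h₁ (Z ω)) := by
  set P : Ω → ℝ × ℝ := fun ω => (h₀ (Z ω), h₁ (Z ω))
  set W : Ω → ℝ × ℝ := fun ω => (V₀ ω, V₁ ω)
  set S : Set ((ℝ × ℝ) × ℝ × ℝ) := {x | x.2.1 ≤ x.1.1} ∩ {x | x.2.2 ≤ x.1.2}
  have hP : Measurable P := (hh₀.comp hZ).prodMk (hh₁.comp hZ)
  have hW : Measurable W := hV₀.prodMk hV₁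
  have hPW : IndepFun P W μ :=
    hindep.comp (hh₀.prodMk hh₁) (measurable_fst.prodMk (measurable_fst.comp measurable_snd))
  have hS : MeasurableSet S :=
    (measurableSet_le (by fun_prop) (by fun_prop)).inter
      (measurableSet_le (by fun_prop) (by fun_prop))
  have hD : (fun ω => D₀ ω * D₁ ω) = fun ω => S.indicator 1 (P ω, W ω) := by
    funext ω
    by_cases h0 : V₀ ω ≤ h₀ (Z ω) <;> by_cases h1 : V₁ ω ≤ h₁ (Z ω) <;>
      simp [hD₀, hD₁, S, P, W, h0, h1]
  have hCP : (fun ω => C (h₀ (Z ω)) (h₁ (Z ω)))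
      = fun ω => (μ.map W).real (Prod.mk (P ω) ⁻¹' S) := by
    funext ω
    rw [hC, measureReal_def, Measure.map_apply hW (measurable_prodMk_left hS)]
    rfl
  rw [hD, hCP]
  exact hPW.condExp_indicator_preimage_ae_eq hP hW hS
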